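/- Let L be a language over Σ, let I be a finite nonempty index set, and for each i ∈ I let L_i be a language over Σ with ε ∉ L_i and ψ_i a test-free PDL formula; let δ be a test-free PDL formula. If EF^L ⊤ is equivalent to δ ∨ ⋀_{i∈I} EF^{L_i} ψ_i, then there exists i ∈ I such that EF^L ⊤ is equivalent to δ ∨ EF^{L_i} ψ_i. -/
import Mathlib


namespace PDL

/-- Test-free PDL formulas (without atomic propositions) over the alphabet `α`:
`⊥`, `⊤`, disjunction, conjunction, and `EF^L`/`AG^L` for languages `L ⊆ α*`. -/
inductive Formula (α : Type) : Type where
  | bot : Formula α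
  | top : Formula α
  | or  : Formula α → Formula α → Formula α
  | and : Formula α → Formula α → Formula α
  | EF  : Set (List α) → Formula α → Formula α
  | AG  : Set (List α) → Formula α → Formula α

/-- `Path tr s w t` : there is a finite path from `s` to `t` along the
transition relation `tr` whose labels read the word `w`. -/
inductive Path {σ α : Type} (tr : σ → α → σ → Prop) : σ → List α → σ → Prop where
  | nil (s : σ) : Path tr s [] s
  | cons {s t u : σ} {a : α} {w : List α} :
      tr s a t → Path tr t w u → Path tr s (a :: w) u

/-- Satisfaction of a formula at a state of a labeled transition system. -/
def Sat {σ α : Type} (tr : σ → α → σ → Prop) (s : σ) : Formula α → Prop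
  | .bot => False
  | .top => True
  | .or φ ψ => Sat tr s φ ∨ Sat tr s ψ
  | .and φ ψ => Sat tr s φ ∧ Sat tr s ψ
  | .EF L φ => ∃ w t, Path tr s w t ∧ w ∈ L ∧ Sat tr t φ
  | .AG L φ => ∀ w t, Path tr s w t → w ∈ L → Sat tr t φ

/-- A structure: a pointed labeled transition system. -/
structure Struct (α : Type) : Type 1 where
  S : Type
  tr : S → α → S → Prop
  root : S

/-- A structure satisfies a formula iff its root does. -/
def SatS {α : Type} (M : Struct α) (φ : Formula α) : Prop := Sat M.tr M.root φ

/-- Two formulas are equivalent iff exactly the same structures satisfy them. -/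
def FEquiv {α : Type} (φ ψ : Formula α) : Prop := ∀ M : Struct α, SatS M φ ↔ SatS M ψ

/-- A formula is a tautology iff every structure satisfies it. -/
def Tautology {α : Type} (φ : Formula α) : Prop := ∀ M : Struct α, SatS M φ

/-- `φ` semantically implies `ψ`. -/
def SemImplies {α : Type} (φ ψ : Formula α) : Prop := ∀ M : Struct α, SatS M φ → SatS M ψ

/-- A formula is ε-free iff the empty word lies in no language annotating an
`EF`/`AG` operator occurring in it. -/
def EpsFree {α : Type} : Formula α → Prop
  | .bot => True
  | .top => True
  | .or φ ψ => EpsFree φ ∧ EpsFree ψ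
  | .and φ ψ => EpsFree φ ∧ EpsFree ψ
  | .EF L φ => [] ∉ L ∧ EpsFree φ
  | .AG L φ => [] ∉ L ∧ EpsFree φ

/-- Finite disjunction of a list of formulas. -/
def bigOr {α : Type} : List (Formula α) → Formula α
  | [] => .bot
  | φ :: l => .or φ (bigOr l)

/-- Finite conjunction of a list of formulas. -/
def bigAnd {α : Type} : List (Formula α) → Formula α
  | [] => .top
  | φ :: l => .and φ (bigAnd l)

/-- `M'` extends `M`: the states of `M` embed into those of `M'`, preserving
the root and the transitions. -/
def Extends {α : Type} (M M' : Struct α) : Prop :=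
  ∃ i : M.S → M'.S, Function.Injective i ∧ i M.root = M'.root ∧
    ∀ s a t, M.tr s a t → M'.tr (i s) a (i t)

/-- The linear structure `π_w` for a word `w`: states `0, …, |w|`, root `0`,
and a transition `i →^c i+1` where `c` is the `(i+1)`-st letter of `w`. -/
def pathStruct {α : Type} (w : List α) : Struct α where
  S := Fin (w.length + 1)
  tr := fun i a j => ∃ h : (i : ℕ) < w.length, w.get ⟨i, h⟩ = a ∧ (j : ℕ) = (i : ℕ) + 1
  root := ⟨0, Nat.succ_pos _⟩

/-- `Lang φ` (relative to the designated letter `dollar`): the set of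
`$`-free words `w` such that `π_{w ++ [$]}` satisfies `φ`. -/
def Lang {α : Type} (dollar : α) (φ : Formula α) : Set (List α) :=
  {w | dollar ∉ w ∧ SatS (pathStruct (w ++ [dollar])) φ}

section Aux

variable {σ τ α : Type}

lemma path_nil_eq {tr : σ → α → σ → Prop} {s t : σ} (h : Path tr s [] t) : t = s := by
  cases h; rfl

lemma path_cons_inv {tr : σ → α → σ → Prop} {s u : σ} {a : α} {w : List α}
    (h : Path tr s (a :: w) u) : ∃ t, tr s a t ∧ Path tr t w u := by
  cases h with
  | cons h1 h2 => exact ⟨_, h1, h2⟩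

/-- `e` embeds `tr` into `tr'` with no extra edges from/between image states. -/
def IsEmb (tr : σ → α → σ → Prop) (tr' : τ → α → τ → Prop) (e : σ → τ) : Prop :=
  (∀ s a t, tr s a t → tr' (e s) a (e t)) ∧
  (∀ s a u, tr' (e s) a u → ∃ t, u = e t ∧ tr s a t)

lemma path_emb {tr : σ → α → σ → Prop} {tr' : τ → α → τ → Prop} {e : σ → τ}
    (he : IsEmb tr tr' e) {s t : σ} {w : List α}
    (h : Path tr s w t) : Path tr' (e s) w (e t) := by
  induction h with
  | nil => exact Path.nil _
  | cons h1 _ ih => exact Path.cons (he.1 _ _ _ h1) ih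

lemma path_emb_inv {tr : σ → α → σ → Prop} {tr' : τ → α → τ → Prop} {e : σ → τ}
    (he : IsEmb tr tr' e) {w : List α} :
    ∀ {s : σ} {u : τ}, Path tr' (e s) w u → ∃ t, u = e t ∧ Path tr s w t := by
  induction w with
  | nil => intro s u h; exact ⟨s, path_nil_eq h, Path.nil _⟩
  | cons a w ih =>
    intro s u h
    obtain ⟨v, h1, h2⟩ := path_cons_inv h
    obtain ⟨t1, rfl, ht1⟩ := he.2 _ _ _ h1
    obtain ⟨t, rfl, hp⟩ := ih h2
    exact ⟨t, rfl, Path.cons ht1 hp⟩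

lemma sat_emb {tr : σ → α → σ → Prop} {tr' : τ → α → τ → Prop} {e : σ → τ}
    (he : IsEmb tr tr' e) (φ : Formula α) :
    ∀ s : σ, Sat tr' (e s) φ ↔ Sat tr s φ := by
  induction φ with
  | bot => intro s; exact Iff.rfl
  | top => intro s; exact Iff.rfl
  | or φ ψ ihφ ihψ => intro s; exact or_congr (ihφ s) (ihψ s)
  | and φ ψ ihφ ihψ => intro s; exact and_congr (ihφ s) (ihψ s)
  | EF L φ ih =>
    intro s
    constructor
    · rintro ⟨w, u, hp, hw, hs⟩
      obtain ⟨t, rfl, hp'⟩ := path_emb_inv he hp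
      exact ⟨w, t, hp', hw, (ih t).mp hs⟩
    · rintro ⟨w, t, hp, hw, hs⟩
      exact ⟨w, e t, path_emb he hp, hw, (ih t).mpr hs⟩
  | AG L φ ih =>
    intro s
    constructor
    · intro h w t hp hw
      exact (ih t).mp (h w (e t) (path_emb he hp) hw)
    · intro h w u hp hw
      obtain ⟨t, rfl, hp'⟩ := path_emb_inv he hp
      exact (ih t).mpr (h w t hp' hw)

lemma sat_bigAnd {tr : σ → α → σ → Prop} {s : σ} {l : List (Formula α)} :
    Sat tr s (bigAnd l) ↔ ∀ φ ∈ l, Sat tr s φ := by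
  induction l with
  | nil => simp [bigAnd, Sat]
  | cons φ l ih =>
    show Sat tr s φ ∧ Sat tr s (bigAnd l) ↔ _
    simp [ih]

end Aux

/-- Elimination of conjunctions of `EF`-formulas: if
`EF^L ⊤ ≡ δ ∨ ⋀_{i∈I} EF^{L_i} ψ_i` with `I` finite and nonempty and
`ε ∉ L_i` for all `i`, then `EF^L ⊤ ≡ δ ∨ EF^{L_i} ψ_i` for some `i ∈ I`. -/
theorem stmt_11 {α : Type} (L : Set (List α)) {m : ℕ} (hm : 0 < m)
    (Ls : Fin m → Set (List α)) (hLs : ∀ i, [] ∉ Ls i)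
    (ψs : Fin m → Formula α) (δ : Formula α)
    (h : FEquiv (.EF L .top)
      (.or δ (bigAnd ((List.finRange m).map fun i => Formula.EF (Ls i) (ψs i))))) :
    ∃ i : Fin m, FEquiv (.EF L .top) (.or δ (.EF (Ls i) (ψs i))) := by
  by_contra hcon
  push_neg at hcon
  -- forward direction always holds
  have hfwd : ∀ (i : Fin m) (M : Struct α),
      SatS M (.EF L .top) → SatS M (.or δ (.EF (Ls i) (ψs i))) := by
    intro i M hM
    have := (h M).mp hM
    rcases this with hδ | hAnd
    · exact Or.inl hδ
    · refine Or.inr ?_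
      have := sat_bigAnd.mp hAnd (Formula.EF (Ls i) (ψs i))
        (List.mem_map.mpr ⟨i, List.mem_finRange i, rfl⟩)
      exact this
  -- counterexample structures
  have hM : ∀ i : Fin m, ∃ M : Struct α,
      Sat M.tr M.root (.EF (Ls i) (ψs i)) ∧ ¬ SatS M (.EF L .top) := by
    intro i
    have hne := hcon i
    rw [FEquiv] at hne
    push_neg at hne
    obtain ⟨M, hM⟩ := hne
    rcases hM with ⟨hA, hB⟩ | ⟨hA, hB⟩
    · exact absurd (hfwd i M hA) hB
    · rcases hB with hδ | hEF
      · exact absurd ((h M).mpr (Or.inl hδ)) hA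
      · exact ⟨M, hEF, hA⟩
  choose M hMef hMnot using hM
  -- if ε ∈ L, EF^L ⊤ is a tautology: contradiction with M 0
  by_cases hεL : ([] : List α) ∈ L
  · exact hMnot ⟨0, hm⟩ ⟨[], (M ⟨0, hm⟩).root, Path.nil _, hεL, trivial⟩
  -- glued structure
  · set T := Option (Σ i : Fin m, (M i).S) with hT
    set tr' : T → α → T → Prop := fun x a y =>
      ∃ (i : Fin m) (t : (M i).S), y = some ⟨i, t⟩ ∧
        ((x = none ∧ (M i).tr (M i).root a t) ∨
          ∃ s : (M i).S, x = some ⟨i, s⟩ ∧ (M i).tr s a t) with htr'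
    set N : Struct α := ⟨T, tr', none⟩ with hN
    have hemb : ∀ i : Fin m, IsEmb (M i).tr tr' (fun s => (some ⟨i, s⟩ : T)) := by
      intro i
      constructor
      · intro s a t hst
        exact ⟨i, t, rfl, Or.inr ⟨s, rfl, hst⟩⟩
      · intro s a u hu
        obtain ⟨j, t, rfl, hcase⟩ := hu
        rcases hcase with ⟨hnone, -⟩ | ⟨s', hs', htr⟩
        · exact absurd hnone (by simp)
        · have hs'' : (⟨i, s⟩ : Σ i : Fin m, (M i).S) = ⟨j, s'⟩ :=
            Option.some.inj hs'
          injection hs'' with h1 h2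
          subst h1
          cases h2
          exact ⟨t, rfl, htr⟩
    -- the root of N satisfies every EF^{L_i} ψ_i
    have hrootEF : ∀ i : Fin m, Sat tr' (none : T) (.EF (Ls i) (ψs i)) := by
      intro i
      obtain ⟨w, t, hp, hw, hsat⟩ := hMef i
      cases w with
      | nil => exact absurd hw (hLs i)
      | cons a w' =>
        obtain ⟨t1, h1, h2⟩ := path_cons_inv hp
        refine ⟨a :: w', some ⟨i, t⟩, ?_, hw, (sat_emb (hemb i) (ψs i) t).mpr hsat⟩
        exact Path.cons ⟨i, t1, rfl, Or.inl ⟨rfl, h1⟩⟩ (path_emb (hemb i) h2)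
    -- hence N satisfies the big conjunction, hence EF^L ⊤
    have hNef : SatS N (.EF L .top) := by
      refine (h N).mpr (Or.inr ?_)
      refine sat_bigAnd.mpr ?_
      intro φ hφ
      obtain ⟨i, -, rfl⟩ := List.mem_map.mp hφ
      exact hrootEF i
    -- extract a witness path; it must enter some component
    obtain ⟨w, t, hp, hwL, -⟩ := hNef
    cases w with
    | nil => exact hεL hwL
    | cons a w' =>
      obtain ⟨u, h1, h2⟩ := path_cons_inv hp
      obtain ⟨i, t1, rfl, hcase⟩ := h1
      have ht1 : (M i).tr (M i).root a t1 := by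
        rcases hcase with ⟨-, h⟩ | ⟨s, hs, -⟩
        · exact h
        · exact absurd hs (by simp)
      obtain ⟨t', rfl, hp'⟩ := path_emb_inv (hemb i) h2
      exact hMnot i ⟨a :: w', t', Path.cons ht1 hp', hwL, trivial⟩

end PDL
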